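/- arXiv:2303.09586 — 10 statements merged into one kernel-verified Lean document; each statement's English description precedes it below -/
import Mathlib

section
/- Let K be a convex body, λ ≤ 1/2, γ ≤ 1/10, x ∈ K, and set R = M_K(x) - x. If y ∈ x + λR, then y + γR ⊆ M_K^{2γ}(y). (Translated copies of a Macbeath region act as proxies for nearby Macbeath regions.) -/
/-!
Write `y = x + λ r` with `x + r ∈ K`. Since `λ ≤ 1/2`, the point `x + 2λ r` lies on the segment
from `x` to `x + r`, hence in `K`. For `x ± w ∈ K`, the points `y ± w/2` are the midpoints of
`x + 2λ r` and `x ± w`, so `w/2 ∈ M_K(y) - y`; scaling by `2γ` gives `y + γ w ∈ M_K^{2γ}(y)`.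
-/

/-- The scaled Macbeath region `M_K^λ(x) = x + λ((K - x) ∩ (x - K))`. -/
def macbeathScaled {d : ℕ} (K : Set (EuclideanSpace ℝ (Fin d))) (x : EuclideanSpace ℝ (Fin d))
    (lam : ℝ) : Set (EuclideanSpace ℝ (Fin d)) :=
  (fun y => x + lam • y) '' (((fun y => y - x) '' K) ∩ ((fun y => x - y) '' K))

section CenteredMacbeath

variable {E : Type*} [AddCommGroup E] {K : Set E} {x r w : E}

/-- `M_K(x) - x`. -/
def centeredMacbeath (K : Set E) (x : E) : Set E :=
  ((fun z => z - x) '' K) ∩ ((fun z => x - z) '' K)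

theorem mem_centeredMacbeath : w ∈ centeredMacbeath K x ↔ x + w ∈ K ∧ x - w ∈ K := by
  constructor
  · rintro ⟨⟨a, ha, rfl⟩, ⟨b, hb, hba⟩⟩
    dsimp only at hba ⊢
    refine ⟨by rwa [add_sub_cancel], ?_⟩
    rwa [← hba, sub_sub_cancel]
  · rintro ⟨h₁, h₂⟩
    exact ⟨⟨_, h₁, add_sub_cancel_left x w⟩, ⟨_, h₂, sub_sub_cancel x w⟩⟩

variable [Module ℝ E] {lam : ℝ}

theorem Convex.add_smul_add_half_smul_mem (hK : Convex ℝ K) (hx : x ∈ K) (hr : x + r ∈ K)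
    (hw : x + w ∈ K) (hlam0 : 0 ≤ lam) (hlam : lam ≤ 1 / 2) :
    x + lam • r + (1 / 2 : ℝ) • w ∈ K := by
  have hfar : x + (2 * lam) • r ∈ K := hK.add_smul_mem hx hr ⟨by linarith, by linarith⟩
  convert hK hfar hw (by norm_num : (0 : ℝ) ≤ 1 / 2) (by norm_num : (0 : ℝ) ≤ 1 / 2)
    (by norm_num) using 1
  module

theorem Convex.half_smul_mem_centeredMacbeath (hK : Convex ℝ K) (hx : x ∈ K) (hr : x + r ∈ K)
    (hw : w ∈ centeredMacbeath K x) (hlam0 : 0 ≤ lam) (hlam : lam ≤ 1 / 2) :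
    (1 / 2 : ℝ) • w ∈ centeredMacbeath K (x + lam • r) := by
  rw [mem_centeredMacbeath] at hw ⊢
  refine ⟨hK.add_smul_add_half_smul_mem hx hr hw.1 hlam0 hlam, ?_⟩
  convert hK.add_smul_add_half_smul_mem hx hr (w := -w) (by simpa [← sub_eq_add_neg] using hw.2)
    hlam0 hlam using 1
  module

end CenteredMacbeath

theorem macbeath_translate_proxy_general {d : ℕ} (K : Set (EuclideanSpace ℝ (Fin d)))
    (hK : Convex ℝ K) (x y : EuclideanSpace ℝ (Fin d)) (hx : x ∈ K)
    (lam gam : ℝ) (hlam0 : 0 < lam) (hlam : lam ≤ 1/2)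
    (R : Set (EuclideanSpace ℝ (Fin d)))
    (hR : R = ((fun z => z - x) '' K) ∩ ((fun z => x - z) '' K))
    (hy : y ∈ (fun z => x + lam • z) '' R) :
    (fun z => y + gam • z) '' R ⊆ macbeathScaled K y (2 * gam) := by
  subst hR
  obtain ⟨r, hr, rfl⟩ := hy
  rintro _ ⟨w, hw, rfl⟩
  refine ⟨(1 / 2 : ℝ) • w,
    hK.half_smul_mem_centeredMacbeath hx (mem_centeredMacbeath.1 hr).1 hw hlam0.le hlam, ?_⟩
  dsimp only
  module

/-- let `λ ≤ 1/2`, `γ ≤ 1/10`, `x ∈ K`, and `R = M_K(x) - x`.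
If `y ∈ x + λR` then `y + γR ⊆ M_K^{2γ}(y)`: translated copies of a Macbeath region act
as proxies for nearby Macbeath regions. -/
theorem macbeath_translate_proxy {d : ℕ} (K : Set (EuclideanSpace ℝ (Fin d)))
    (hK : Convex ℝ K) (x y : EuclideanSpace ℝ (Fin d)) (hx : x ∈ K)
    (lam gam : ℝ) (hlam0 : 0 < lam) (hlam : lam ≤ 1/2) (hgam0 : 0 < gam) (hgam : gam ≤ 1/10)
    (R : Set (EuclideanSpace ℝ (Fin d)))
    (hR : R = ((fun z => z - x) '' K) ∩ ((fun z => x - z) '' K))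
    (hy : y ∈ (fun z => x + lam • z) '' R) :
    (fun z => y + gam • z) '' R ⊆ macbeathScaled K y (2 * gam) :=
  macbeath_translate_proxy_general K hK x y hx lam gam hlam0 hlam R hR hy
end

section
/- Let K be a convex body, x ∈ K, λ ≤ 1/2, γ ≤ 1/10, R = M_K(x) - x, and y ∈ x + λR. Then y + (1 - λ)R ⊆ M_K(y). -/
/-- The Macbeath region `M_K(x) = x + ((K - x) ∩ (x - K))`. -/
def macbeath {d : ℕ} (K : Set (EuclideanSpace ℝ (Fin d))) (x : EuclideanSpace ℝ (Fin d)) :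
    Set (EuclideanSpace ℝ (Fin d)) :=
  (fun y => x + y) '' (((fun y => y - x) '' K) ∩ ((fun y => x - y) '' K))

theorem mem_sub_image_inter_iff {E : Type*} [AddCommGroup E] {K : Set E} {x z : E} :
    z ∈ ((fun w => w - x) '' K) ∩ ((fun w => x - w) '' K) ↔ x + z ∈ K ∧ x - z ∈ K := by
  simp only [Set.mem_inter_iff, Set.mem_image]
  constructor
  · rintro ⟨⟨k, hk, rfl⟩, ⟨k', hk', hk'z⟩⟩
    refine ⟨by simpa using hk, ?_⟩
    rw [← hk'z, sub_sub_cancel]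
    exact hk'
  · rintro ⟨hadd, hsub⟩
    exact ⟨⟨x + z, hadd, add_sub_cancel_left x z⟩, ⟨x - z, hsub, sub_sub_cancel x z⟩⟩

/-- `x + λ r + (1 - λ) z = λ (x + r) + (1 - λ) (x + z)`. -/
theorem Convex.add_smul_add_one_sub_smul_mem {E : Type*} [AddCommGroup E] [Module ℝ E]
    {K : Set E} (hK : Convex ℝ K) {x r z : E} (hr : x + r ∈ K) (hz : x + z ∈ K)
    {lam : ℝ} (h₀ : 0 ≤ lam) (h₁ : lam ≤ 1) :
    x + lam • r + (1 - lam) • z ∈ K := by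
  have hmem := hK hr hz h₀ (sub_nonneg.mpr h₁) (add_sub_cancel lam 1)
  convert hmem using 1
  module

theorem add_mem_macbeath_iff {d : ℕ} {K : Set (EuclideanSpace ℝ (Fin d))}
    {y w : EuclideanSpace ℝ (Fin d)} : y + w ∈ macbeath K y ↔ y + w ∈ K ∧ y - w ∈ K := by
  rw [macbeath, (add_right_injective y).mem_set_image, mem_sub_image_inter_iff]

theorem macbeath_translate_key_general {d : ℕ} (K : Set (EuclideanSpace ℝ (Fin d)))
    (hK : Convex ℝ K) (x y : EuclideanSpace ℝ (Fin d))
    (lam : ℝ) (hlam0 : 0 < lam) (hlam : lam ≤ 1/2)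
    (R : Set (EuclideanSpace ℝ (Fin d)))
    (hR : R = ((fun z => z - x) '' K) ∩ ((fun z => x - z) '' K))
    (hy : y ∈ (fun z => x + lam • z) '' R) :
    (fun z => y + (1 - lam) • z) '' R ⊆ macbeath K y := by
  subst hR
  obtain ⟨r, hr, rfl⟩ := hy
  rintro _ ⟨z, hz, rfl⟩
  rw [mem_sub_image_inter_iff] at hr hz
  have hlam1 : lam ≤ 1 := by linarith
  refine add_mem_macbeath_iff.mpr ⟨?_, ?_⟩
  · exact hK.add_smul_add_one_sub_smul_mem hr.1 hz.1 hlam0.le hlam1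
  · rw [sub_eq_add_neg, ← smul_neg]
    exact hK.add_smul_add_one_sub_smul_mem hr.1 (sub_eq_add_neg x z ▸ hz.2) hlam0.le hlam1

/-- with `λ ≤ 1/2`, `γ ≤ 1/10`, `R = M_K(x) - x`, and `y ∈ x + λR`,
we have `y + (1 - λ)R ⊆ M_K(y)`. -/
theorem macbeath_translate_key {d : ℕ} (K : Set (EuclideanSpace ℝ (Fin d)))
    (hK : Convex ℝ K) (x y : EuclideanSpace ℝ (Fin d)) (hx : x ∈ K)
    (lam gam : ℝ) (hlam0 : 0 < lam) (hlam : lam ≤ 1/2) (hgam0 : 0 < gam) (hgam : gam ≤ 1/10)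
    (R : Set (EuclideanSpace ℝ (Fin d)))
    (hR : R = ((fun z => z - x) '' K) ∩ ((fun z => x - z) '' K))
    (hy : y ∈ (fun z => x + lam • z) '' R) :
    (fun z => y + (1 - lam) • z) '' R ⊆ macbeath K y :=
  macbeath_translate_key_general K hK x y lam hlam0 hlam R hR hy
end

section
/- Let C be a cap of a convex body K (the intersection of K with a halfspace) and let C^λ be its λ-expansion for λ ≥ 1 (the cap cut by a hyperplane parallel to the base of C whose absolute width is λ times that of C). Then C^λ is contained in the image of C under scaling by factor λ about the apex of C, and consequently vol(C^λ) ≤ λ^d · vol(C). -/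
/-!
Contracting by `λ⁻¹` about the apex `a` keeps `K` inside itself by convexity, and, since
affine functionals commute with homotheties, it lifts the level `⟪a,u⟫ - λ (⟪a,u⟫ - t)` of the
expanded cap to the level `t` of the cap. Hence `C^λ` lies in the `λ`-dilate of `C`, whose volume
is `λ^d vol(C)`.
-/

open RealInnerProductSpace MeasureTheory

theorem AffineMap.homothety_homothety_inv {k V P : Type*} [Field k] [AddCommGroup V]
    [Module k V] [AddTorsor V P] (a : P) {c : k} (hc : c ≠ 0) (z : P) :
    homothety a c (homothety a c⁻¹ z) = z := by
  rw [← homothety_mul_apply, mul_inv_cancel₀ hc, homothety_one, id_apply]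

theorem Convex.inter_le_subset_image_homothety {E : Type*} [AddCommGroup E] [Module ℝ E]
    {K : Set E} (hK : Convex ℝ K) {a : E} (ha : a ∈ K) (f : E →ᵃ[ℝ] ℝ) (t : ℝ) {c : ℝ}
    (hc : 1 ≤ c) :
    K ∩ {z | f a - c * (f a - t) ≤ f z} ⊆ AffineMap.homothety a c '' (K ∩ {z | t ≤ f z}) := by
  rintro z ⟨hzK, hz : f a - c * (f a - t) ≤ f z⟩
  have hc₀ : 0 < c := zero_lt_one.trans_le hc
  refine ⟨AffineMap.homothety a c⁻¹ z, ⟨?_, ?_⟩, AffineMap.homothety_homothety_inv a hc₀.ne' z⟩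
  · rw [AffineMap.homothety_eq_lineMap]
    exact hK.lineMap_mem ha hzK ⟨by positivity, inv_le_one_of_one_le₀ hc⟩
  · have hdrop : c⁻¹ * (f a - f z) ≤ f a - t := by
      rw [inv_mul_le_iff₀ hc₀]
      linarith
    show t ≤ f _
    rw [AffineMap.homothety_eq_lineMap, AffineMap.apply_lineMap, AffineMap.lineMap_apply_ring']
    linarith

theorem cap_expansion_general {d : ℕ} (K : Set (EuclideanSpace ℝ (Fin d)))
    (hK : Convex ℝ K)
    (u : EuclideanSpace ℝ (Fin d))
    (a : EuclideanSpace ℝ (Fin d)) (ha : a ∈ K)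
    (t : ℝ) (lam : ℝ) (hlam : 1 ≤ lam) :
    K ∩ {z | ⟪a, u⟫ - lam * (⟪a, u⟫ - t) ≤ ⟪z, u⟫} ⊆
      (fun z => a + lam • (z - a)) '' (K ∩ {z | t ≤ ⟪z, u⟫}) ∧
    volume (K ∩ {z | ⟪a, u⟫ - lam * (⟪a, u⟫ - t) ≤ ⟪z, u⟫}) ≤
      ENNReal.ofReal (lam ^ d) * volume (K ∩ {z | t ≤ ⟪z, u⟫}) := by
  have hsub := hK.inter_le_subset_image_homothety ha ((innerₛₗ ℝ).flip u).toAffineMap t hlam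
  simp only [LinearMap.coe_toAffineMap, LinearMap.flip_apply, innerₛₗ_apply_apply] at hsub
  have hhom : (fun z => a + lam • (z - a)) = AffineMap.homothety a lam := by
    ext z : 1
    rw [AffineMap.homothety_apply, vsub_eq_sub, vadd_eq_add, add_comm]
  rw [hhom]
  refine ⟨hsub, (measure_mono hsub).trans_eq ?_⟩
  rw [Measure.addHaar_image_homothety, finrank_euclideanSpace_fin,
    abs_of_nonneg (by positivity)]

/-- Let `C = K ∩ {z | t ≤ ⟨z,u⟩}` be a cap of the convex body `K`, with apex
`a ∈ K` (a point of `K` on the parallel supporting hyperplane `⟨·,u⟩ = ⟨a,u⟩`). For `λ ≥ 1`,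
the `λ`-expansion `C^λ` (the cap cut by the parallel hyperplane whose absolute width is `λ`
times that of `C`) is contained in the image of `C` under scaling by factor `λ` about the
apex `a`, and consequently `vol(C^λ) ≤ λ^d · vol(C)`. -/
theorem cap_expansion {d : ℕ} (K : Set (EuclideanSpace ℝ (Fin d)))
    (hK : Convex ℝ K) (hKc : IsCompact K)
    (u : EuclideanSpace ℝ (Fin d)) (hu : ‖u‖ = 1)
    (a : EuclideanSpace ℝ (Fin d)) (ha : a ∈ K)
    (hapex : ∀ z ∈ K, ⟪z, u⟫ ≤ ⟪a, u⟫)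
    (t : ℝ) (ht : t ≤ ⟪a, u⟫) (lam : ℝ) (hlam : 1 ≤ lam) :
    K ∩ {z | ⟪a, u⟫ - lam * (⟪a, u⟫ - t) ≤ ⟪z, u⟫} ⊆
      (fun z => a + lam • (z - a)) '' (K ∩ {z | t ≤ ⟪z, u⟫}) ∧
    volume (K ∩ {z | ⟪a, u⟫ - lam * (⟪a, u⟫ - t) ≤ ⟪z, u⟫}) ≤
      ENNReal.ofReal (lam ^ d) * volume (K ∩ {z | t ≤ ⟪z, u⟫}) :=
  cap_expansion_general K hK u a ha t lam hlam
end

section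
/- Let K be a convex body containing the origin in its interior, let C₁ ⊆ C₂ be two caps of K neither of which contains the origin. Then the relative width of C₁ is at most the relative width of C₂. -/
open RealInnerProductSpace

/-!
Let `p` be a point of `K` where the functional of the smaller cap `C₁` attains its maximum `s₁`.
The point `(t₁ / s₁) • p` lies on the segment from the origin to `p`, hence in `K`, and on the
hyperplane cutting off `C₁`, hence in `C₂`. Evaluating the functional of `C₂` there gives
`t₂ ≤ (t₁ / s₁) s₂`, i.e. `t₂ / s₂ ≤ t₁ / s₁`, which is the claim since the relative width
of a cap is `1 - t / s`.
-/

def cap {E : Type*} [AddCommGroup E] [Module ℝ E] (K : Set E) (f : E →ₗ[ℝ] ℝ) (t : ℝ) : Set E :=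
  K ∩ {z | t ≤ f z}

namespace StarConvex

variable {E : Type*} [AddCommGroup E] [Module ℝ E] {K : Set E} {f g : E →ₗ[ℝ] ℝ} {p : E}
  {s t s' t' : ℝ}

lemma smul_mem_cap (hK : StarConvex ℝ 0 K) (hp : p ∈ K) (hfp : f p = s) (ht : 0 < t)
    (hts : t ≤ s) : (t / s) • p ∈ cap K f t := by
  have hs : 0 < s := ht.trans_le hts
  refine ⟨hK.smul_mem hp (by positivity) (div_le_one_of_le₀ hts hs.le), ?_⟩
  simp only [Set.mem_ofPred_eq, map_smul, smul_eq_mul, hfp, div_mul_cancel₀ t hs.ne', le_refl]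

lemma mul_le_mul_of_cap_subset (hK : StarConvex ℝ 0 K) (hp : p ∈ K) (hfp : f p = s)
    (ht : 0 < t) (hts : t ≤ s) (hg : ∀ z ∈ K, g z ≤ s') (hsub : cap K f t ⊆ cap K g t') :
    t' * s ≤ t * s' := by
  have hs : 0 < s := ht.trans_le hts
  have hq : t' ≤ g ((t / s) • p) := (hsub (hK.smul_mem_cap hp hfp ht hts)).2
  rw [map_smul, smul_eq_mul] at hq
  calc t' * s ≤ t / s * g p * s := by gcongr
    _ = t * g p := by field_simp
    _ ≤ t * s' := by gcongr; exact hg p hp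

end StarConvex

theorem cap_containment_width_general {d : ℕ} (K : Set (EuclideanSpace ℝ (Fin d)))
    (hK : Convex ℝ K)
    (h0 : (0 : EuclideanSpace ℝ (Fin d)) ∈ interior K)
    (u₁ u₂ : EuclideanSpace ℝ (Fin d))
    (s₁ s₂ t₁ t₂ : ℝ)
    (hs₁ : ∀ z ∈ K, ⟪z, u₁⟫ ≤ s₁) (hs₁' : ∃ z ∈ K, ⟪z, u₁⟫ = s₁)
    (hs₂ : ∀ z ∈ K, ⟪z, u₂⟫ ≤ s₂)
    (ht₁ : 0 < t₁) (ht₂ : 0 < t₂)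
    (hne : (K ∩ {z | t₁ ≤ ⟪z, u₁⟫}).Nonempty)
    (hsub : K ∩ {z | t₁ ≤ ⟪z, u₁⟫} ⊆ K ∩ {z | t₂ ≤ ⟪z, u₂⟫}) :
    (s₁ - t₁) / s₁ ≤ (s₂ - t₂) / s₂ := by
  obtain ⟨p, hpK, hps⟩ := hs₁'
  obtain ⟨w, hwK, hwt⟩ := hne
  have hts₁ : t₁ ≤ s₁ := hwt.trans (hs₁ w hwK)
  have hcap (u : EuclideanSpace ℝ (Fin d)) (t : ℝ) :
      K ∩ {z | t ≤ ⟪z, u⟫} = cap K (innerₛₗ ℝ u) t := by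
    simp only [cap, innerₛₗ_apply_apply, real_inner_comm]
  have hratio : t₂ * s₁ ≤ t₁ * s₂ :=
    (hK.starConvex (interior_subset h0)).mul_le_mul_of_cap_subset (f := innerₛₗ ℝ u₁)
      (g := innerₛₗ ℝ u₂) hpK
      (by rwa [innerₛₗ_apply_apply, real_inner_comm]) ht₁ hts₁
      (fun z hz => by simpa only [innerₛₗ_apply_apply, real_inner_comm] using hs₂ z hz)
      (by rwa [← hcap, ← hcap])
  have hs₁pos : 0 < s₁ := ht₁.trans_le hts₁
  have hs₂pos : 0 < s₂ := pos_of_mul_pos_right ((mul_pos ht₂ hs₁pos).trans_le hratio) ht₁.le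
  rw [div_le_div_iff₀ hs₁pos hs₂pos]
  linarith

/-- Let `K` be a convex body containing the origin in its interior, and let
`C₁ ⊆ C₂` be two caps of `K` neither of which contains the origin (equivalently, cut off by
hyperplanes `⟨·,uᵢ⟩ = tᵢ` with `tᵢ > 0`, with supporting values `sᵢ = max_{z ∈ K} ⟨z,uᵢ⟩`).
Then the relative width `(s₁ - t₁)/s₁` of `C₁` is at most the relative width
`(s₂ - t₂)/s₂` of `C₂`. -/
theorem cap_containment_width {d : ℕ} (K : Set (EuclideanSpace ℝ (Fin d)))
    (hK : Convex ℝ K) (hKc : IsCompact K)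
    (h0 : (0 : EuclideanSpace ℝ (Fin d)) ∈ interior K)
    (u₁ u₂ : EuclideanSpace ℝ (Fin d)) (hu₁ : ‖u₁‖ = 1) (hu₂ : ‖u₂‖ = 1)
    (s₁ s₂ t₁ t₂ : ℝ)
    (hs₁ : ∀ z ∈ K, ⟪z, u₁⟫ ≤ s₁) (hs₁' : ∃ z ∈ K, ⟪z, u₁⟫ = s₁)
    (hs₂ : ∀ z ∈ K, ⟪z, u₂⟫ ≤ s₂) (hs₂' : ∃ z ∈ K, ⟪z, u₂⟫ = s₂)
    (ht₁ : 0 < t₁) (ht₂ : 0 < t₂)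
    (hne : (K ∩ {z | t₁ ≤ ⟪z, u₁⟫}).Nonempty)
    (hsub : K ∩ {z | t₁ ≤ ⟪z, u₁⟫} ⊆ K ∩ {z | t₂ ≤ ⟪z, u₂⟫}) :
    (s₁ - t₁) / s₁ ≤ (s₂ - t₂) / s₂ :=
  cap_containment_width_general K hK h0 u₁ u₂ s₁ s₂ t₁ t₂ hs₁ hs₁' hs₂ ht₁ ht₂ hne hsub
end

section
/- Let K be a convex body with the origin in its interior and let p ∈ K, p ≠ O. Let p₀ be the intersection of the ray Op with ∂K, let h₀ be a supporting hyperplane of K at p₀, and let C be the cap cut by the hyperplane through p parallel to h₀. Then width(C) = ray(p), and C has minimum relative width among all caps of K containing p. -/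
open RealInnerProductSpace Filter Topology

/-! The point `p₀ = c • p` lies in `K`, so every cap `⟪z, v⟫ ≥ t` of `K` containing `p` has
support value `s ≥ ⟪p₀, v⟫ = c ⟪p, v⟫ ≥ c t`, whence its width `1 - t / s` is at least `1 - 1 / c`.
The cap parallel to the supporting hyperplane at `p₀` attains this bound, and `1 - 1 / c` is
exactly `ray(p)`. -/

theorem pos_of_forall_inner_le_of_zero_mem_interior {E : Type*} [NormedAddCommGroup E]
    [InnerProductSpace ℝ E] {K : Set E} (h0 : (0 : E) ∈ interior K) {u : E} (hu : u ≠ 0)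
    {b : ℝ} (hb : ∀ z ∈ K, ⟪z, u⟫ ≤ b) : 0 < b := by
  have hnhds : ∀ᶠ t : ℝ in 𝓝 0, t • u ∈ K :=
    ((continuous_id.smul continuous_const).tendsto' 0 0 (zero_smul ℝ u)).eventually
      (mem_interior_iff_mem_nhds.mp h0)
  obtain ⟨t, htK, ht⟩ :=
    ((hnhds.filter_mono nhdsWithin_le_nhds).and (self_mem_nhdsWithin (s := Set.Ioi 0))).exists
  have hle := hb _ htK
  rw [real_inner_smul_left, real_inner_self_eq_norm_sq] at hle
  have : 0 < t * ‖u‖ ^ 2 := mul_pos ht (by positivity)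
  linarith

theorem norm_sub_smul_div_norm_smul {E : Type*} [NormedAddCommGroup E] [NormedSpace ℝ E]
    {p : E} (hp : p ≠ 0) {c : ℝ} (hc : 1 ≤ c) : ‖p - c • p‖ / ‖c • p‖ = (c - 1) / c := by
  have hpn : 0 < ‖p‖ := norm_pos_iff.mpr hp
  rw [show p - c • p = (1 - c) • p by rw [sub_smul, one_smul], norm_smul, norm_smul,
    Real.norm_of_nonpos (by linarith), Real.norm_of_nonneg (by linarith),
    mul_div_mul_right _ _ hpn.ne', neg_sub]

theorem sub_div_le_sub_div_of_mul_le {c t s : ℝ} (hc : 1 ≤ c) (ht : 0 < t) (hts : c * t ≤ s) :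
    (c - 1) / c ≤ (s - t) / s := by
  have hs : 0 < s := by nlinarith
  rw [sub_div, sub_div, div_self (by positivity), div_self hs.ne']
  gcongr 1 - ?_
  rw [div_le_div_iff₀ hs (by positivity)]
  linarith

theorem min_width_cap_general {d : ℕ} (K : Set (EuclideanSpace ℝ (Fin d)))
    (hKc : IsCompact K)
    (h0 : (0 : EuclideanSpace ℝ (Fin d)) ∈ interior K)
    (p : EuclideanSpace ℝ (Fin d)) (hpne : p ≠ 0)
    (c : ℝ) (hc : 1 ≤ c) (hp₀ : c • p ∈ frontier K)
    (u : EuclideanSpace ℝ (Fin d)) (hu : ‖u‖ = 1)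
    (hsupp : ∀ z ∈ K, ⟪z, u⟫ ≤ ⟪c • p, u⟫) :
    (⟪c • p, u⟫ - ⟪p, u⟫) / ⟪c • p, u⟫ = ‖p - c • p‖ / ‖c • p‖ ∧
    (∀ (v : EuclideanSpace ℝ (Fin d)) (t' s' : ℝ), ‖v‖ = 1 → 0 < t' → t' ≤ ⟪p, v⟫ →
      (∀ z ∈ K, ⟪z, v⟫ ≤ s') → (∃ z ∈ K, ⟪z, v⟫ = s') →
      (⟪c • p, u⟫ - ⟪p, u⟫) / ⟪c • p, u⟫ ≤ (s' - t') / s') := by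
  have hc0 : 0 < c := by linarith
  have hp₀K : c • p ∈ K := hKc.isClosed.frontier_subset hp₀
  have hu0 : u ≠ 0 := norm_ne_zero_iff.mp (by simp [hu])
  have hpu : 0 < ⟪p, u⟫ := by
    have := pos_of_forall_inner_le_of_zero_mem_interior h0 hu0 hsupp
    rw [real_inner_smul_left] at this
    exact pos_of_mul_pos_right this hc0.le
  have hwidth : (⟪c • p, u⟫ - ⟪p, u⟫) / ⟪c • p, u⟫ = (c - 1) / c := by
    rw [real_inner_smul_left]
    field_simp
  refine ⟨hwidth.trans (norm_sub_smul_div_norm_smul hpne hc).symm, ?_⟩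
  intro v t' s' _ ht' htp hs' _
  rw [hwidth]
  refine sub_div_le_sub_div_of_mul_le hc ht' ?_
  calc c * t' ≤ c * ⟪p, v⟫ := by gcongr
    _ = ⟪c • p, v⟫ := (real_inner_smul_left p v c).symm
    _ ≤ s' := hs' _ hp₀K

/-- Let `K` be a convex body with the origin in its interior and `p ∈ K`,
`p ≠ O`. Let `p₀ = c • p` (with `c ≥ 1`) be the intersection of the ray `Op` with `∂K`,
let `u` be the outer unit normal of a supporting hyperplane `h₀` of `K` at `p₀`, and let
`C` be the cap cut by the hyperplane through `p` parallel to `h₀`.  Then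
`width(C) = (⟨p₀,u⟩ - ⟨p,u⟩)/⟨p₀,u⟩` equals `ray(p) = ‖p - p₀‖/‖p₀‖`, and `C` has minimum
relative width among all caps of `K` (not containing the origin) that contain `p`. -/
theorem min_width_cap {d : ℕ} (K : Set (EuclideanSpace ℝ (Fin d)))
    (hK : Convex ℝ K) (hKc : IsCompact K)
    (h0 : (0 : EuclideanSpace ℝ (Fin d)) ∈ interior K)
    (p : EuclideanSpace ℝ (Fin d)) (hp : p ∈ K) (hpne : p ≠ 0)
    (c : ℝ) (hc : 1 ≤ c) (hp₀ : c • p ∈ frontier K)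
    (u : EuclideanSpace ℝ (Fin d)) (hu : ‖u‖ = 1)
    (hsupp : ∀ z ∈ K, ⟪z, u⟫ ≤ ⟪c • p, u⟫) :
    (⟪c • p, u⟫ - ⟪p, u⟫) / ⟪c • p, u⟫ = ‖p - c • p‖ / ‖c • p‖ ∧
    (∀ (v : EuclideanSpace ℝ (Fin d)) (t' s' : ℝ), ‖v‖ = 1 → 0 < t' → t' ≤ ⟪p, v⟫ →
      (∀ z ∈ K, ⟪z, v⟫ ≤ s') → (∃ z ∈ K, ⟪z, v⟫ = s') →
      (⟪c • p, u⟫ - ⟪p, u⟫) / ⟪c • p, u⟫ ≤ (s' - t') / s') :=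
  min_width_cap_general K hKc h0 p hpne c hc hp₀ u hu hsupp
end

section
/- Let K₀ ⊆ K₁ be convex bodies with the origin in the interior of K₀. The polar of the arithmetic-mean body equals the harmonic-mean body of the polars: (K_A(K₀,K₁))* = K_H(K₁*, K₀*). In particular, the harmonic-mean body is convex. -/
open RealInnerProductSpace
open scoped Pointwise

/-- The polar body `K* = {u : ⟨u,v⟩ ≤ 1 for all v ∈ K}`. -/
def polarBody {d : ℕ} (K : Set (EuclideanSpace ℝ (Fin d))) : Set (EuclideanSpace ℝ (Fin d)) :=
  {u | ∀ v ∈ K, ⟪u, v⟫ ≤ 1}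

/-!
The gauge of `K*` is the support function `h_K(u) = max_{v ∈ K} ⟪u, v⟫` of `K` (nonnegative as
soon as `0 ∈ K`), and `u ∈ (½(K₀ + K₁))*` says exactly that `h_{K₀}(u) + h_{K₁}(u) ≤ 2`.
So both sides are the sublevel set `{u | (h_{K₁}(u) + h_{K₀}(u)) / 2 ≤ 1}`, and a polar is convex.
-/

section Polar

variable {d : ℕ} {K K₀ K₁ : Set (EuclideanSpace ℝ (Fin d))} {u v : EuclideanSpace ℝ (Fin d)}

theorem convex_polarBody : Convex ℝ (polarBody K) := by
  intro x hx y hy a b ha hb hab w hw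
  calc ⟪a • x + b • y, w⟫ = a * ⟪x, w⟫ + b * ⟪y, w⟫ := by
        rw [inner_add_left, real_inner_smul_left, real_inner_smul_left]
    _ ≤ a * 1 + b * 1 := by gcongr <;> [exact hx w hw; exact hy w hw]
    _ = 1 := by rw [mul_one, mul_one, hab]

theorem mem_smul_polarBody_iff {r : ℝ} (hr : 0 < r) :
    u ∈ r • polarBody K ↔ ∀ v ∈ K, ⟪u, v⟫ ≤ r := by
  rw [Set.mem_smul_set_iff_inv_smul_mem₀ hr.ne']
  refine forall₂_congr fun v _ => ?_
  rw [real_inner_smul_left, inv_mul_le_iff₀ hr, mul_one]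

theorem gauge_polarBody_eq_inner_of_isMaxOn (hK : 0 ∈ K) (hv : v ∈ K)
    (hmax : IsMaxOn (fun w => ⟪u, w⟫) K v) : gauge (polarBody K) u = ⟪u, v⟫ := by
  have hnonneg : 0 ≤ ⟪u, v⟫ := by simpa using hmax hK
  have mem_iff {r : ℝ} (hr : 0 < r) : u ∈ r • polarBody K ↔ ⟪u, v⟫ ≤ r :=
    (mem_smul_polarBody_iff hr).trans ⟨fun h => h v hv, fun h w hw => (hmax hw).trans h⟩
  apply le_antisymm
  · refine le_of_forall_gt_imp_ge_of_dense fun r hr => ?_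
    exact gauge_le_of_mem (hnonneg.trans hr.le) ((mem_iff (hnonneg.trans_lt hr)).2 hr.le)
  · have hpos : 0 < ⟪u, v⟫ + 1 := by linarith
    exact le_csInf ⟨_, hpos, (mem_iff hpos).2 (le_add_of_nonneg_right zero_le_one)⟩
      fun r ⟨hr, hu⟩ => (mem_iff hr).1 hu

theorem mem_polarBody_inv_two_smul_add_iff :
    u ∈ polarBody ((2⁻¹ : ℝ) • (K₀ + K₁)) ↔ ∀ v ∈ K₀, ∀ w ∈ K₁, ⟪u, v⟫ + ⟪u, w⟫ ≤ 2 := by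
  rw [← Set.image2_add, ← Set.image_smul]
  simp only [polarBody, Set.forall_mem_image, Set.forall_mem_image2, Set.mem_ofPred_eq,
    real_inner_smul_right, inner_add_right]
  refine forall₂_congr fun v _ => forall₂_congr fun w _ => ?_
  constructor <;> intro h <;> linarith

end Polar

theorem polar_arithmeticMean_eq_harmonicMean_general {d : ℕ} (K₀ K₁ : Set (EuclideanSpace ℝ (Fin d)))
    (hK₀c : IsCompact K₀) (hK₁c : IsCompact K₁)
    (h0 : (0 : EuclideanSpace ℝ (Fin d)) ∈ interior K₀)
    (hsub : K₀ ⊆ K₁) :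
    polarBody ((2⁻¹ : ℝ) • (K₀ + K₁)) =
      {x | (gauge (polarBody K₁) x + gauge (polarBody K₀) x) / 2 ≤ 1} ∧
    Convex ℝ {x | (gauge (polarBody K₁) x + gauge (polarBody K₀) x) / 2 ≤ 1} := by
  have h₀ : (0 : EuclideanSpace ℝ (Fin d)) ∈ K₀ := interior_subset h0
  have h₁ : (0 : EuclideanSpace ℝ (Fin d)) ∈ K₁ := hsub h₀
  have heq : polarBody ((2⁻¹ : ℝ) • (K₀ + K₁)) =
      {x | (gauge (polarBody K₁) x + gauge (polarBody K₀) x) / 2 ≤ 1} := by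
    ext u
    have hcont : Continuous fun v => ⟪u, v⟫ := continuous_const.inner continuous_id
    obtain ⟨v₀, hv₀, hmax₀⟩ := hK₀c.exists_isMaxOn ⟨0, h₀⟩ hcont.continuousOn
    obtain ⟨v₁, hv₁, hmax₁⟩ := hK₁c.exists_isMaxOn ⟨0, h₁⟩ hcont.continuousOn
    rw [mem_polarBody_inv_two_smul_add_iff, Set.mem_ofPred_eq,
      gauge_polarBody_eq_inner_of_isMaxOn h₀ hv₀ hmax₀,
      gauge_polarBody_eq_inner_of_isMaxOn h₁ hv₁ hmax₁]
    refine ⟨fun h => by linarith [h v₀ hv₀ v₁ hv₁], fun h v hv w hw => ?_⟩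
    linarith [isMaxOn_iff.1 hmax₀ v hv, isMaxOn_iff.1 hmax₁ w hw]
  exact ⟨heq, heq ▸ convex_polarBody⟩

/-- Let `K₀ ⊆ K₁` be convex bodies with the origin in the interior of `K₀`.
The polar of the arithmetic-mean body `K_A(K₀,K₁) = ½(K₀ ⊕ K₁)` equals the harmonic-mean
body of the polars, `K_H(K₁*, K₀*)` (the body whose gauge functional is the mean of the
gauges of `K₁*` and `K₀*`, equivalently whose radial function is the harmonic mean of
theirs). In particular, the harmonic-mean body is convex. -/
theorem polar_arithmeticMean_eq_harmonicMean {d : ℕ} (K₀ K₁ : Set (EuclideanSpace ℝ (Fin d)))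
    (hK₀ : Convex ℝ K₀) (hK₁ : Convex ℝ K₁)
    (hK₀c : IsCompact K₀) (hK₁c : IsCompact K₁)
    (h0 : (0 : EuclideanSpace ℝ (Fin d)) ∈ interior K₀)
    (hsub : K₀ ⊆ K₁) :
    polarBody ((2⁻¹ : ℝ) • (K₀ + K₁)) =
      {x | (gauge (polarBody K₁) x + gauge (polarBody K₀) x) / 2 ≤ 1} ∧
    Convex ℝ {x | (gauge (polarBody K₁) x + gauge (polarBody K₀) x) / 2 ≤ 1} :=
  polar_arithmeticMean_eq_harmonicMean_general K₀ K₁ hK₀c hK₁c h0 hsub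
end

section
/- Let O, b, c, d, h, h' be collinear points (in the order h', b, c, h on the line through O, with d beyond h) such that (O,h;d,c) = -1 (harmonic bundle). If (h',c;h,b) ≤ -λ, then (O,c;h,b) ≤ -λ and (O,c;d,b) = (O,c;h,b)/2, hence (O,c;d,b) ≤ -λ/2. -/
/-!
The identities `(a,b;d,c) = (a,b;c,d)⁻¹`, `(a,c;b,d) = 1 - (a,b;c,d)` and
`(a,b;c,e)·(a,b;e,d) = (a,b;c,d)` turn the harmonic condition `(O,h;d,c) = -1` into
`(O,c;d,h) = 1/2`, so `(O,c;d,b) = (O,c;d,h)·(O,c;h,b) = (O,c;h,b)/2`.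
For the inequality, `(x,c;h,b) = (1 + (h-b)/(b-x)) / ((h-c)/(b-c))` is antitone in `x < b`,
the denominator being negative, so moving `h'` up to `O` can only decrease it.
-/

/-- The cross ratio `(a,b;c,d)` of four collinear points, coordinatized by reals, with
signed distances: `(a,b;c,d) = (‖ac‖/‖ad‖)/(‖bc‖/‖bd‖)`. -/
noncomputable def crossRatio (a b c d : ℝ) : ℝ := ((c - a) / (d - a)) / ((c - b) / (d - b))

theorem crossRatio_eq_div (a b c d : ℝ) :
    crossRatio a b c d = (c - a) * (d - b) / ((d - a) * (c - b)) :=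
  div_div_div_eq _ _ _ _

theorem crossRatio_swap_right (a b c d : ℝ) : crossRatio a b d c = (crossRatio a b c d)⁻¹ := by
  simp only [crossRatio, inv_div, div_div_div_eq, mul_comm]

theorem crossRatio_swap_middle {a b c d : ℝ} (hda : d ≠ a) (hcb : c ≠ b) :
    crossRatio a c b d = 1 - crossRatio a b c d := by
  rw [crossRatio_eq_div, crossRatio_eq_div]
  have hda' : d - a ≠ 0 := sub_ne_zero.mpr hda
  have hcb' : c - b ≠ 0 := sub_ne_zero.mpr hcb
  field_simp
  ring

theorem crossRatio_mul_crossRatio {a b c d e : ℝ} (hea : e ≠ a) (heb : e ≠ b) :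
    crossRatio a b c e * crossRatio a b e d = crossRatio a b c d := by
  have hk : (e - a) * (e - b) ≠ 0 := mul_ne_zero (sub_ne_zero.mpr hea) (sub_ne_zero.mpr heb)
  rw [crossRatio_eq_div, crossRatio_eq_div, crossRatio_eq_div, div_mul_div_comm,
    ← mul_div_mul_right ((c - a) * (d - b)) _ hk]
  congr 1 <;> ring

theorem crossRatio_eq_half_of_harmonic {O c d h : ℝ} (hdO : d ≠ O) (hch : c ≠ h)
    (hharm : crossRatio O h d c = -1) : crossRatio O c d h = 1 / 2 := by
  have h₁ : crossRatio O h c d = -1 := by rw [crossRatio_swap_right, hharm]; norm_num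
  have h₂ : crossRatio O c h d = 2 := by rw [crossRatio_swap_middle hdO hch, h₁]; norm_num
  rw [crossRatio_swap_right, h₂, one_div]

theorem crossRatio_eq_div_two_of_harmonic {O b c d h : ℝ} (hdO : d ≠ O) (hch : c ≠ h)
    (hhO : h ≠ O) (hharm : crossRatio O h d c = -1) :
    crossRatio O c d b = crossRatio O c h b / 2 := by
  rw [← crossRatio_mul_crossRatio hhO hch.symm, crossRatio_eq_half_of_harmonic hdO hch hharm]
  ring

theorem crossRatio_antitoneOn_Iio {b c h : ℝ} (hbc : b < c) (hch : c < h) :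
    AntitoneOn (fun x => crossRatio x c h b) (Set.Iio b) := by
  intro x hx y hy hxy
  have hx' : 0 < b - x := sub_pos.mpr hx
  have hy' : 0 < b - y := sub_pos.mpr hy
  refine div_le_div_of_nonpos_of_le
    (div_nonpos_of_nonneg_of_nonpos (by linarith) (by linarith)) ?_
  rw [div_le_div_iff₀ hx' hy']
  nlinarith

theorem cross_ratio_harmonic_halving_general (O b c d h h' lam : ℝ)
    (ord₀ : h' < O) (ord₁ : O < b) (ord₂ : b < c) (ord₃ : c < h) (ord₄ : h < d)
    (hharm : crossRatio O h d c = -1)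
    (hcr : crossRatio h' c h b ≤ -lam) :
    crossRatio O c h b ≤ -lam ∧
    crossRatio O c d b = crossRatio O c h b / 2 ∧
    crossRatio O c d b ≤ -lam / 2 := by
  have hOh : crossRatio O c h b ≤ -lam :=
    (crossRatio_antitoneOn_Iio ord₂ ord₃ (ord₀.trans ord₁) ord₁ ord₀.le).trans hcr
  have hhalf : crossRatio O c d b = crossRatio O c h b / 2 :=
    crossRatio_eq_div_two_of_harmonic (by linarith) ord₃.ne (by linarith) hharm
  exact ⟨hOh, hhalf, by rw [hhalf]; linarith⟩

/-- Let `O, b, c, d, h, h'` be collinear points (coordinatized by reals), in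
the order `h', O, b, c, h` with `d` beyond `h`, such that `(O,h;d,c) = -1` (harmonic
bundle). If `(h',c;h,b) ≤ -λ`, then `(O,c;h,b) ≤ -λ` and `(O,c;d,b) = (O,c;h,b)/2`, hence
`(O,c;d,b) ≤ -λ/2`. -/
theorem cross_ratio_harmonic_halving (O b c d h h' lam : ℝ) (hlam : 0 < lam)
    (ord₀ : h' < O) (ord₁ : O < b) (ord₂ : b < c) (ord₃ : c < h) (ord₄ : h < d)
    (hharm : crossRatio O h d c = -1)
    (hcr : crossRatio h' c h b ≤ -lam) :
    crossRatio O c h b ≤ -lam ∧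
    crossRatio O c d b = crossRatio O c h b / 2 ∧
    crossRatio O c d b ≤ -lam / 2 :=
  cross_ratio_harmonic_halving_general O b c d h h' lam ord₀ ord₁ ord₂ ord₃ ord₄ hharm hcr
end

section
/- Let K ⊆ ℝ^d be a convex body containing the origin in its interior and let 0 < ε ≤ 1/2. Every Macbeath region M_K^{1/2}(x) centered at a point x with relative ray distance ray_K(x) ≤ ε is contained in the shell K \ (1-2ε)K, and the relative volume of this shell satisfies vol(K \ (1-2ε)K)/vol(K) = 1 - (1-2ε)^d ≤ 2dε. -/
open MeasureTheory
open scoped Pointwise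
open Topology

/-!
Measure everything with the gauge `g` of `K`. If `z = x + λy` lies in `M_K^λ(x)`, then
`(1 + λ)x = z + λ(x - y)` with `x - y ∈ K`, so `(1 + λ) g(x) ≤ g(z) + λ`. For `x = (1 - δ)p₀` with
`p₀ ∈ ∂K` we have `g(x) ≥ 1 - δ`, while `g(z) ≤ 1 - 2ε` on `(1 - 2ε)K`; with `λ = 1/2` this forces
`2ε ≤ 3δ/2`, impossible for `δ ≤ ε`. The volume identity is the scaling `vol(tK) = tᵈ vol(K)`
together with `tK ⊆ K`, and the bound is Bernoulli's inequality.
-/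

section MacbeathRegion

variable {d : ℕ} {K : Set (EuclideanSpace ℝ (Fin d))} {x z : EuclideanSpace ℝ (Fin d)} {lam : ℝ}

theorem mem_macbeathScaled_iff :
    z ∈ macbeathScaled K x lam ↔ ∃ y, x + y ∈ K ∧ x - y ∈ K ∧ x + lam • y = z := by
  simp only [macbeathScaled, Set.mem_image, Set.mem_inter_iff]
  constructor
  · rintro ⟨y, ⟨⟨k₁, hk₁, rfl⟩, ⟨k₂, hk₂, hy⟩⟩, rfl⟩
    refine ⟨k₁ - x, by simpa using hk₁, ?_, rfl⟩
    rwa [← hy, sub_sub_cancel]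
  · rintro ⟨y, hplus, hminus, rfl⟩
    exact ⟨y, ⟨⟨x + y, hplus, by abel⟩, ⟨x - y, hminus, sub_sub_cancel x y⟩⟩, rfl⟩

theorem macbeathScaled_subset (hK : Convex ℝ K) (hlam : lam ∈ Set.Icc (0 : ℝ) 1) :
    macbeathScaled K x lam ⊆ K := by
  intro z hz
  obtain ⟨y, hplus, hminus, rfl⟩ := mem_macbeathScaled_iff.mp hz
  have hx : x ∈ K := by
    convert hK hplus hminus (by norm_num : (0 : ℝ) ≤ 1/2) (by norm_num : (0 : ℝ) ≤ 1/2)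
      (by norm_num) using 1
    module
  exact hK.add_smul_mem hx hplus hlam

theorem add_mul_gauge_le_of_mem_macbeathScaled (hK : Convex ℝ K) (habs : Absorbent ℝ K)
    (hlam : 0 ≤ lam) (hz : z ∈ macbeathScaled K x lam) :
    (1 + lam) * gauge K x ≤ gauge K z + lam := by
  obtain ⟨y, -, hminus, rfl⟩ := mem_macbeathScaled_iff.mp hz
  have hsplit : (1 + lam) • x = (x + lam • y) + lam • (x - y) := by module
  calc (1 + lam) * gauge K x = gauge K ((1 + lam) • x) :=
        (gauge_smul_of_nonneg (by linarith : (0 : ℝ) ≤ 1 + lam) x).symm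
    _ ≤ gauge K (x + lam • y) + lam * gauge K (x - y) := by
        rw [hsplit, ← smul_eq_mul, ← gauge_smul_of_nonneg hlam]
        exact gauge_add_le hK habs _ _
    _ ≤ gauge K (x + lam • y) + lam := by
        gcongr
        exact mul_le_of_le_one_right hlam (gauge_le_one_of_mem hminus)

theorem disjoint_macbeathScaled_smul {p₀ : EuclideanSpace ℝ (Fin d)} {δ t : ℝ} (hK : Convex ℝ K) (h0 : K ∈ 𝓝 0)
    (hp₀ : p₀ ∉ interior K) (hδ : δ ≤ 1) (ht : 0 ≤ t) (hlam : 0 ≤ lam)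
    (hlt : t + lam < (1 + lam) * (1 - δ)) :
    Disjoint (macbeathScaled K ((1 - δ) • p₀) lam) (t • K) := by
  rw [Set.disjoint_left]
  intro z hz hzt
  have hgauge_p₀ : 1 ≤ gauge K p₀ :=
    not_lt.mp fun h => hp₀ ((gauge_lt_one_iff_mem_interior hK h0).mp h)
  have hgauge_x : gauge K ((1 - δ) • p₀) = (1 - δ) * gauge K p₀ :=
    gauge_smul_of_nonneg (by linarith) p₀
  have : (1 + lam) * (1 - δ) ≤ t + lam :=
    calc (1 + lam) * (1 - δ) ≤ (1 + lam) * gauge K ((1 - δ) • p₀) := by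
          rw [hgauge_x]
          exact mul_le_mul_of_nonneg_left (le_mul_of_one_le_right (by linarith) hgauge_p₀)
            (by linarith)
      _ ≤ gauge K z + lam :=
          add_mul_gauge_le_of_mem_macbeathScaled hK (absorbent_nhds_zero h0) hlam hz
      _ ≤ t + lam := by gcongr; exact gauge_le_of_mem ht hzt
  linarith

end MacbeathRegion

theorem Convex.smul_set_subset_of_zero_mem {E : Type*} [AddCommGroup E] [Module ℝ E]
    {K : Set E} (hK : Convex ℝ K) (h0 : (0 : E) ∈ K) {t : ℝ} (ht : t ∈ Set.Icc (0 : ℝ) 1) :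
    t • K ⊆ K := by
  rintro _ ⟨k, hk, rfl⟩
  exact hK.smul_mem_of_zero_mem h0 hk ht

theorem Convex.addHaar_diff_smul {E : Type*} [NormedAddCommGroup E] [NormedSpace ℝ E]
    [MeasurableSpace E] [BorelSpace E] [FiniteDimensional ℝ E] (μ : Measure E)
    [μ.IsAddHaarMeasure] {K : Set E} (hK : Convex ℝ K) (hKc : IsCompact K) (h0 : (0 : E) ∈ K)
    {t : ℝ} (ht : t ∈ Set.Icc (0 : ℝ) 1) :
    μ (K \ t • K) = ENNReal.ofReal (1 - t ^ Module.finrank ℝ E) * μ K := by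
  have hμK : μ K ≠ ⊤ := hKc.measure_lt_top.ne
  have hscale : μ (t • K) = ENNReal.ofReal (t ^ Module.finrank ℝ E) * μ K := by
    rw [Measure.addHaar_smul, abs_of_nonneg (pow_nonneg ht.1 _)]
  rw [measure_sdiff (hK.smul_set_subset_of_zero_mem h0 ht)
      (hKc.smul t).measurableSet.nullMeasurableSet
      (hscale ▸ ENNReal.mul_ne_top ENNReal.ofReal_ne_top hμK),
    hscale, ENNReal.ofReal_sub _ (pow_nonneg ht.1 _), ENNReal.ofReal_one,
    ENNReal.sub_mul fun _ _ => hμK, one_mul]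

theorem one_sub_one_sub_pow_le {x : ℝ} (hx : x ≤ 2) (n : ℕ) : 1 - (1 - x) ^ n ≤ n * x := by
  have := one_add_mul_le_pow (by linarith : -2 ≤ -x) n
  rw [← sub_eq_add_neg] at this
  linarith

/-- let `K` be a convex body containing the origin in its interior and
`0 < ε ≤ 1/2`. Every Macbeath region `M_K^{1/2}(x)` centered at a point `x` at relative ray
distance at most `ε` (i.e. `x = (1-δ)•p₀` for a boundary point `p₀` on the ray `Ox`, with
`0 ≤ δ ≤ ε`) is contained in the shell `K \ (1-2ε)K`, and the relative volume of this shell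
is `vol(K \ (1-2ε)K)/vol(K) = 1 - (1-2ε)^d ≤ 2dε`. -/
theorem macbeath_in_shell {d : ℕ} (K : Set (EuclideanSpace ℝ (Fin d)))
    (hK : Convex ℝ K) (hKc : IsCompact K)
    (h0 : (0 : EuclideanSpace ℝ (Fin d)) ∈ interior K)
    (ε : ℝ) (hε : 0 < ε) (hε' : ε ≤ 1/2) :
    (∀ (x p₀ : EuclideanSpace ℝ (Fin d)) (δ : ℝ), x ∈ K → 0 ≤ δ → δ ≤ ε →
        p₀ ∈ frontier K → x = (1 - δ) • p₀ →
        macbeathScaled K x (1/2) ⊆ K \ (1 - 2*ε) • K) ∧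
    volume (K \ (1 - 2*ε) • K) = ENNReal.ofReal (1 - (1 - 2*ε)^d) * volume K ∧
    (1 - (1 - 2*ε)^d : ℝ) ≤ 2 * d * ε := by
  have hK0 : K ∈ 𝓝 0 := mem_interior_iff_mem_nhds.mp h0
  refine ⟨?_, ?_, ?_⟩
  · rintro x p₀ δ - - hδ hp₀ rfl
    refine Set.subset_sdiff.mpr ⟨macbeathScaled_subset hK (by norm_num), ?_⟩
    exact disjoint_macbeathScaled_smul hK hK0 hp₀.2 (by linarith) (by linarith) (by norm_num)
      (by linarith)
  · simpa only [finrank_euclideanSpace_fin] using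
      hK.addHaar_diff_smul volume hKc (interior_subset h0)
        (t := 1 - 2 * ε) ⟨by linarith, by linarith⟩
  · exact (one_sub_one_sub_pow_le (x := 2 * ε) (by linarith) d).trans_eq (by ring)
end

section
/- Let K₀ ⊂ K₁ be convex bodies with the origin O in the interior of K₀, and let S = shadow_{K₁}(R) be the shadow of a region R ⊆ K₁, i.e., the set of points x ∈ K₁ such that segment Ox intersects R. If R is contained in the convex hull of two convex sets M' and M'' where M'' is the image of M' under scaling about O by a factor f ≥ 1, and every ray from O meeting R meets both M' and M'' appropriately, then shadow_{K₁}(M') ⊆ conv(M' ∪ M'') whenever for every x ∈ shadow_{K₁}(M') ∩ ∂K₁ and every b' ∈ Ox ∩ M' we have ‖Ox‖ ≤ f‖Ob'‖. -/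
/-! A point `x` of the shadow lies on a ray `O b'` with `b' ∈ M'`. Pushing `x` radially out to
the frontier of `K₁` (via the gauge of `K₁`) only increases `‖x‖`, so the hypothesis gives
`‖x‖ ≤ f ‖b'‖`; hence `x = s • b'` with `1 ≤ s ≤ f`, which lies on the segment from `b' ∈ M'`
to `f • b' ∈ f • M'`. -/

open scoped Pointwise

/-- The shadow of a region `R ⊆ K` with respect to `K` (with the origin `O` in the
interior of `K`): the set of points `x ∈ K` such that the segment `Ox` intersects `R`. -/
def shadow {d : ℕ} (K R : Set (EuclideanSpace ℝ (Fin d))) : Set (EuclideanSpace ℝ (Fin d)) :=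
  {x ∈ K | (segment ℝ 0 x ∩ R).Nonempty}

open Set Topology

section

variable {E : Type*} [NormedAddCommGroup E] [NormedSpace ℝ E]

theorem norm_le_of_mem_segment_zero {x y : E} (h : x ∈ segment ℝ 0 y) : ‖x‖ ≤ ‖y‖ := by
  have hball : segment ℝ 0 y ⊆ Metric.closedBall 0 ‖y‖ :=
    (convex_closedBall 0 ‖y‖).segment_subset (Metric.mem_closedBall_self (norm_nonneg y))
      (mem_closedBall_zero_iff.mpr le_rfl)
  exact mem_closedBall_zero_iff.mp (hball h)

theorem smul_mem_segment_smul {b : E} {s f : ℝ} (h1s : 1 ≤ s) (hsf : s ≤ f) :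
    s • b ∈ segment ℝ b (f • b) := by
  have hs : s ∈ segment ℝ 1 f := by
    rw [segment_eq_Icc (h1s.trans hsf)]
    exact ⟨h1s, hsf⟩
  have himage := image_segment ℝ (LinearMap.toSpanSingleton ℝ E b).toAffineMap 1 f
  simp only [LinearMap.coe_toAffineMap, LinearMap.toSpanSingleton_apply, one_smul] at himage
  exact himage ▸ mem_image_of_mem _ hs

theorem mem_segment_smul_of_mem_segment_zero {x b : E} {f : ℝ} (hb : b ∈ segment ℝ 0 x)
    (hx : ‖x‖ ≤ f * ‖b‖) : x ∈ segment ℝ b (f • b) := by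
  rw [segment_eq_image] at hb
  obtain ⟨t, ⟨ht0, ht1⟩, rfl⟩ := hb
  simp only [smul_zero, zero_add] at hx ⊢
  rcases eq_or_ne (t • x) 0 with hb0 | hb0
  · rw [hb0, norm_zero, mul_zero] at hx
    rw [norm_le_zero_iff.mp hx, smul_zero, smul_zero]
    exact left_mem_segment ℝ 0 0
  have htpos : 0 < t := ht0.lt_of_ne (by rintro rfl; simp at hb0)
  have hx0 : 0 < ‖x‖ := norm_pos_iff.mpr (right_ne_zero_of_smul hb0)
  have h1 : 1 ≤ t⁻¹ := (one_le_inv₀ htpos).mpr ht1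
  have hf : t⁻¹ ≤ f := by
    rw [norm_smul, Real.norm_of_nonneg ht0] at hx
    rw [inv_le_iff_one_le_mul₀ htpos]
    nlinarith
  simpa [smul_smul, htpos.ne'] using smul_mem_segment_smul (b := t • x) h1 hf

theorem exists_mem_frontier_mem_segment_zero {K : Set E} (hK : Convex ℝ K)
    (hKb : Bornology.IsBounded K) (hK0 : K ∈ 𝓝 0) {x : E} (hx : x ∈ K) (hx0 : x ≠ 0) :
    ∃ y ∈ frontier K, x ∈ segment ℝ 0 y := by
  have hg : 0 < gauge K x :=
    (gauge_pos (absorbent_nhds_zero hK0) ((NormedSpace.isVonNBounded_iff ℝ).mpr hKb)).mpr hx0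
  refine ⟨(gauge K x)⁻¹ • x, (gauge_eq_one_iff_mem_frontier hK hK0).mp ?_, ?_⟩
  · rw [gauge_smul_of_nonneg (inv_nonneg.mpr hg.le), smul_eq_mul, inv_mul_cancel₀ hg.ne']
  · rw [segment_eq_image]
    exact ⟨gauge K x, ⟨hg.le, gauge_le_one_of_mem hx⟩, by simp [smul_smul, hg.ne']⟩

end

theorem shadow_subset_convexHull_general {d : ℕ} (K₀ K₁ M' : Set (EuclideanSpace ℝ (Fin d)))
    (hK₁ : Convex ℝ K₁) (hK₁c : IsCompact K₁)
    (hsub : K₀ ⊂ K₁)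
    (h0 : (0 : EuclideanSpace ℝ (Fin d)) ∈ interior K₀)
    (f : ℝ)
    (hcond : ∀ x ∈ shadow K₁ M' ∩ frontier K₁, ∀ b' ∈ segment ℝ 0 x ∩ M',
      ‖x‖ ≤ f * ‖b'‖) :
    shadow K₁ M' ⊆ convexHull ℝ (M' ∪ f • M') := by
  have hK₁0 : K₁ ∈ 𝓝 0 := mem_interior_iff_mem_nhds.mp (interior_mono hsub.subset h0)
  rintro x ⟨hxK, b, hbx, hbM⟩
  have hnorm : ‖x‖ ≤ f * ‖b‖ := by
    rcases eq_or_ne x 0 with rfl | hx0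
    · obtain rfl : b = 0 := by simpa using hbx
      simp
    obtain ⟨y, hy, hxy⟩ :=
      exists_mem_frontier_mem_segment_zero hK₁ hK₁c.isBounded hK₁0 hxK hx0
    have hby : b ∈ segment ℝ 0 y :=
      (convex_segment 0 y).segment_subset (left_mem_segment ℝ 0 y) hxy hbx
    calc ‖x‖ ≤ ‖y‖ := norm_le_of_mem_segment_zero hxy
      _ ≤ f * ‖b‖ := hcond y ⟨⟨hK₁c.isClosed.frontier_subset hy, b, hby, hbM⟩, hy⟩ b ⟨hby, hbM⟩
  exact segment_subset_convexHull (mem_union_left _ hbM)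
    (mem_union_right _ (smul_mem_smul_set hbM)) (mem_segment_smul_of_mem_segment_zero hbx hnorm)

/-- claim (a) of the main relative-fatness lemma: let `K₀ ⊂ K₁` be convex
bodies with the origin in the interior of `K₀`, `M'` a convex subset of `K₁`, and
`M'' = f • M'` the image of `M'` under scaling about the origin by a factor `f ≥ 1`.
If for every `x ∈ shadow_{K₁}(M') ∩ ∂K₁` and every `b' ∈ Ox ∩ M'` we have
`‖Ox‖ ≤ f‖Ob'‖`, then `shadow_{K₁}(M') ⊆ conv(M' ∪ M'')`. -/
theorem shadow_subset_convexHull {d : ℕ} (K₀ K₁ M' : Set (EuclideanSpace ℝ (Fin d)))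
    (hK₀ : Convex ℝ K₀) (hK₁ : Convex ℝ K₁) (hK₁c : IsCompact K₁)
    (hsub : K₀ ⊂ K₁)
    (h0 : (0 : EuclideanSpace ℝ (Fin d)) ∈ interior K₀)
    (hM' : Convex ℝ M') (hM'K : M' ⊆ K₁)
    (f : ℝ) (hf : 1 ≤ f)
    (hcond : ∀ x ∈ shadow K₁ M' ∩ frontier K₁, ∀ b' ∈ segment ℝ 0 x ∩ M',
      ‖x‖ ≤ f * ‖b'‖) :
    shadow K₁ M' ⊆ convexHull ℝ (M' ∪ f • M') :=
  shadow_subset_convexHull_general K₀ K₁ M' hK₁ hK₁c hsub h0 f hcond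
end

section
/- Let K ⊆ ℝ^d be a convex body whose centroid is at the origin and whose width in every direction is at least ε > 0. Then the Euclidean ball of radius ε/(d+1) centered at the origin is contained in K. -/
/-!
Let `ℓ` be a linear functional with `ℓ ≤ s` on `K` and let `y ∈ K`, `w = s - ℓ y`. For
`0 < t ≤ w`, the homothety centred at `y` with ratio `(w - t) / w` maps `K` into
`K ∩ {ℓ ≤ s - t}`, so this slice has at least `((w - t) / w) ^ d` times the volume of `K`.
Integrating over `t` (layer cake) gives `∫_K (s - ℓ) ≥ w · vol K / (d + 1)`, while the centroid
condition makes the left side `s · vol K`. Hence `w ≤ (d + 1) s`: the supporting hyperplane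
`{ℓ = s}` is at distance at least `1/(d + 1)` of the width from the centroid. A point of the
ball outside `K` would be strictly separated from `K` by such a hyperplane at distance less
than `ε / (d + 1)`.
-/

open RealInnerProductSpace MeasureTheory Set Module

theorem lintegral_Ioc_ofReal_one_sub_div_pow {w : ℝ} (hw : 0 ≤ w) (n : ℕ) :
    ∫⁻ t in Ioc 0 w, ENNReal.ofReal (((w - t) / w) ^ n) = ENNReal.ofReal (w / (n + 1)) := by
  rw [← ofReal_integral_eq_lintegral_ofReal
    ((by fun_prop : Continuous fun t : ℝ => ((w - t) / w) ^ n).integrableOn_Ioc)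
    ((ae_restrict_iff' measurableSet_Ioc).2 (ae_of_all _ fun t ht =>
      pow_nonneg (div_nonneg (sub_nonneg.2 ht.2) hw) _))]
  congr 1
  rcases hw.eq_or_lt with rfl | hw
  · simp
  rw [← intervalIntegral.integral_of_le hw.le]
  simp_rw [div_pow]
  rw [intervalIntegral.integral_div,
    intervalIntegral.integral_comp_sub_left (fun t => t ^ n) w, sub_self, sub_zero, integral_pow]
  field_simp
  ring

section Haar

variable {E : Type*} [NormedAddCommGroup E] [NormedSpace ℝ E] [MeasurableSpace E] [BorelSpace E]
  [FiniteDimensional ℝ E] (μ : Measure E) [μ.IsAddHaarMeasure] {K : Set E} {ℓ : StrongDual ℝ E}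
  {s : ℝ} {y : E}

theorem Convex.ofReal_pow_mul_le_measure_inter_sublevel (hK : Convex ℝ K)
    (hs : ∀ x ∈ K, ℓ x ≤ s) (hy : y ∈ K) {r : ℝ} (hr₀ : 0 ≤ r) (hr₁ : r ≤ 1) :
    ENNReal.ofReal (r ^ finrank ℝ E) * μ K ≤ μ (K ∩ {x | ℓ x ≤ (1 - r) * ℓ y + r * s}) := by
  have himage : AffineMap.homothety y r '' K ⊆ K ∩ {x | ℓ x ≤ (1 - r) * ℓ y + r * s} := by
    rintro _ ⟨x, hx, rfl⟩
    rw [AffineMap.homothety_eq_lineMap]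
    refine ⟨hK.lineMap_mem hy hx ⟨hr₀, hr₁⟩, ?_⟩
    simp only [mem_ofPred_eq, AffineMap.lineMap_apply_module, map_add, map_smul, smul_eq_mul]
    nlinarith [hs x hx]
  calc ENNReal.ofReal (r ^ finrank ℝ E) * μ K = μ (AffineMap.homothety y r '' K) := by
        rw [Measure.addHaar_image_homothety, abs_of_nonneg (by positivity)]
    _ ≤ _ := measure_mono himage

theorem Convex.div_mul_measureReal_le_setIntegral_sub (hK : Convex ℝ K) (hKc : IsCompact K)
    (hs : ∀ x ∈ K, ℓ x ≤ s) (hy : y ∈ K) :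
    (s - ℓ y) / (finrank ℝ E + 1) * μ.real K ≤ ∫ x in K, (s - ℓ x) ∂μ := by
  set w := s - ℓ y
  have hw : 0 ≤ w := sub_nonneg.2 (hs y hy)
  have hμK : μ K ≠ ⊤ := hKc.measure_lt_top.ne
  have hint : IntegrableOn (fun x => s - ℓ x) K μ :=
    (continuous_const.sub ℓ.continuous).continuousOn.integrableOn_compact hKc
  have hnn : 0 ≤ᵐ[μ.restrict K] fun x => s - ℓ x :=
    (ae_restrict_iff' hKc.measurableSet).2 (ae_of_all _ fun x hx => sub_nonneg.2 (hs x hx))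
  have hslice : ∀ t ∈ Ioc 0 w,
      ENNReal.ofReal (((w - t) / w) ^ finrank ℝ E) * μ K ≤ μ.restrict K {x | t ≤ s - ℓ x} := by
    rintro t ⟨ht₀, htw⟩
    have hw₀ : 0 < w := ht₀.trans_le htw
    rw [Measure.restrict_apply (measurableSet_le measurable_const (by fun_prop)), inter_comm]
    convert hK.ofReal_pow_mul_le_measure_inter_sublevel μ hs hy
      (div_nonneg (sub_nonneg.2 htw) hw) (div_le_one_of_le₀ (by linarith) hw) using 3
    have hlevel : (1 - (w - t) / w) * ℓ y + (w - t) / w * s = s - t := by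
      field_simp
      ring
    ext x
    simp only [mem_ofPred_eq, hlevel]
    constructor <;> intro h <;> linarith
  have hlayer :
      ENNReal.ofReal (w / (finrank ℝ E + 1)) * μ K ≤ ∫⁻ x in K, ENNReal.ofReal (s - ℓ x) ∂μ :=
    calc ENNReal.ofReal (w / (finrank ℝ E + 1)) * μ K
        = ∫⁻ t in Ioc 0 w, ENNReal.ofReal (((w - t) / w) ^ finrank ℝ E) * μ K := by
          rw [lintegral_mul_const _ (by fun_prop), lintegral_Ioc_ofReal_one_sub_div_pow hw]
      _ ≤ ∫⁻ t in Ioc 0 w, μ.restrict K {x | t ≤ s - ℓ x} :=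
          setLIntegral_mono' measurableSet_Ioc hslice
      _ ≤ ∫⁻ t in Ioi 0, μ.restrict K {x | t ≤ s - ℓ x} := lintegral_mono_set Ioc_subset_Ioi_self
      _ = _ := (lintegral_eq_lintegral_meas_le _ hnn (by fun_prop)).symm
  rw [← ofReal_integral_eq_lintegral_ofReal hint hnn, ← ENNReal.ofReal_toReal hμK,
    ← ENNReal.ofReal_mul (by positivity)] at hlayer
  exact (ENNReal.ofReal_le_ofReal_iff (integral_nonneg_of_ae hnn)).1 hlayer

theorem Convex.sub_le_finrank_add_one_mul_of_integral_eq_zero (hK : Convex ℝ K)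
    (hKc : IsCompact K) (hμK : μ K ≠ 0) (hcent : ∫ x in K, x ∂μ = 0)
    (hs : ∀ x ∈ K, ℓ x ≤ s) (hy : y ∈ K) :
    s - ℓ y ≤ (finrank ℝ E + 1) * s := by
  have hmean : ∫ x in K, (s - ℓ x) ∂μ = s * μ.real K := by
    have hid : IntegrableOn (fun x => x) K μ := continuous_id.continuousOn.integrableOn_compact hKc
    rw [integral_sub (integrableOn_const (C := s) hKc.measure_lt_top.ne) (ℓ.integrable_comp hid),
      ℓ.integral_comp_comm hid, hcent, map_zero, sub_zero, setIntegral_const, smul_eq_mul,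
      mul_comm]
  have hV : 0 < μ.real K := ENNReal.toReal_pos hμK hKc.measure_lt_top.ne
  have := hK.div_mul_measureReal_le_setIntegral_sub μ hKc hs hy
  rw [hmean] at this
  rw [← div_le_iff₀' (by positivity)]
  exact le_of_mul_le_mul_right this hV

end Haar

section InnerProduct

variable {E : Type*} [NormedAddCommGroup E] [InnerProductSpace ℝ E] {K : Set E}

theorem vectorSpan_eq_top_of_forall_exists_inner_ne [FiniteDimensional ℝ E]
    (h : ∀ v ≠ 0, ∃ x ∈ K, ∃ y ∈ K, ⟪x, v⟫ ≠ ⟪y, v⟫) : vectorSpan ℝ K = ⊤ := by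
  rw [← Submodule.orthogonal_eq_bot_iff, Submodule.eq_bot_iff]
  intro v hv
  by_contra hv₀
  obtain ⟨x, hx, y, hy, hxy⟩ := h v hv₀
  have := (Submodule.mem_orthogonal' _ v).1 hv (x -ᵥ y) (vsub_mem_vectorSpan ℝ hx hy)
  rw [vsub_eq_sub, real_inner_comm, inner_sub_left, sub_eq_zero] at this
  exact hxy this

theorem Convex.measure_pos_of_forall_exists_inner_ne [FiniteDimensional ℝ E] [MeasurableSpace E]
    [BorelSpace E] (μ : Measure E) [μ.IsAddHaarMeasure] (hK : Convex ℝ K) (hne : K.Nonempty)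
    (h : ∀ v ≠ 0, ∃ x ∈ K, ∃ y ∈ K, ⟪x, v⟫ ≠ ⟪y, v⟫) : 0 < μ K := by
  refine Measure.measure_pos_of_nonempty_interior _ ?_
  rw [hK.interior_nonempty_iff_affineSpan_eq_top,
    AffineSubspace.affineSpan_eq_top_iff_vectorSpan_eq_top_of_nonempty ℝ _ _ hne]
  exact vectorSpan_eq_top_of_forall_exists_inner_ne h

theorem exists_mem_mul_norm_le_inner_sub (hne : K.Nonempty) {ε : ℝ}
    (h : ∀ u : E, ‖u‖ = 1 → ∃ x ∈ K, ∃ y ∈ K, ε ≤ ⟪x, u⟫ - ⟪y, u⟫) (v : E) :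
    ∃ x ∈ K, ∃ y ∈ K, ε * ‖v‖ ≤ ⟪x, v⟫ - ⟪y, v⟫ := by
  rcases eq_or_ne v 0 with rfl | hv
  · obtain ⟨x, hx⟩ := hne
    exact ⟨x, hx, x, hx, by simp⟩
  obtain ⟨x, hx, y, hy, hxy⟩ := h (‖v‖⁻¹ • v) (norm_smul_inv_norm hv)
  refine ⟨x, hx, y, hy, ?_⟩
  rw [real_inner_smul_right, real_inner_smul_right, ← mul_sub, le_inv_mul_iff₀ (norm_pos_iff.2 hv),
    mul_comm] at hxy
  exact hxy

end InnerProduct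

/-- let `K ⊆ ℝ^d` be a convex body whose centroid is at the origin
(`∫_K x dx = 0`) and whose width in every direction is at least `ε > 0` (for every unit
`u`, there are points of `K` whose supporting-slab extent in direction `u` is at least
`ε`). Then the Euclidean ball of radius `ε/(d+1)` centered at the origin is contained
in `K`. -/
theorem centroid_width_ball {d : ℕ} (hd : 0 < d) (K : Set (EuclideanSpace ℝ (Fin d)))
    (hK : Convex ℝ K) (hKc : IsCompact K)
    (ε : ℝ) (hε : 0 < ε)
    (hcent : ∫ x in K, x ∂volume = (0 : EuclideanSpace ℝ (Fin d)))
    (hwidth : ∀ u : EuclideanSpace ℝ (Fin d), ‖u‖ = 1 →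
      ∃ x ∈ K, ∃ y ∈ K, ε ≤ ⟪x, u⟫ - ⟪y, u⟫) :
    Metric.closedBall (0 : EuclideanSpace ℝ (Fin d)) (ε / (d + 1)) ⊆ K := by
  have hne : K.Nonempty := by
    obtain ⟨x, hx, -⟩ := hwidth (EuclideanSpace.single ⟨0, hd⟩ 1) (by simp)
    exact ⟨x, hx⟩
  have hwidth_scaled := exists_mem_mul_norm_le_inner_sub hne hwidth
  have hvol : volume K ≠ 0 := (hK.measure_pos_of_forall_exists_inner_ne volume hne fun v hv => by
    obtain ⟨x, hx, y, hy, hxy⟩ := hwidth_scaled v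
    exact ⟨x, hx, y, hy, fun h => by nlinarith [norm_pos_iff.2 hv]⟩).ne'
  intro p hp
  by_contra hpK
  obtain ⟨f, c, hfK, hcp⟩ := geometric_hahn_banach_closed_point hK hKc.isClosed hpK
  set v := (InnerProductSpace.toDual ℝ _).symm f
  have hf (a) : f a = ⟪a, v⟫ := by rw [real_inner_comm, InnerProductSpace.toDual_symm_apply]
  obtain ⟨x, hx, y, hy, hxy⟩ := hwidth_scaled v
  have hsupp := hK.sub_le_finrank_add_one_mul_of_integral_eq_zero volume hKc hvol hcent
    (fun a ha => (hfK a ha).le) hy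
  rw [finrank_euclideanSpace_fin] at hsupp
  have hp' : (d + 1) * ‖p‖ ≤ ε := by
    rwa [mem_closedBall_zero_iff, le_div_iff₀' (by positivity)] at hp
  have := calc ε * ‖v‖ ≤ f x - f y := by rwa [hf, hf]
    _ < c - f y := by linarith [hfK x hx]
    _ ≤ (d + 1) * c := hsupp
    _ < (d + 1) * f p := by gcongr
    _ ≤ (d + 1) * (‖p‖ * ‖v‖) := by gcongr; exact hf p ▸ real_inner_le_norm p v
    _ ≤ ε * ‖v‖ := by rw [← mul_assoc]; gcongr
  exact lt_irrefl _ this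
end
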